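/- arXiv:2003.00074 — 9 statements merged into one kernel-verified Lean document; each statement's English description precedes it below -/
import Mathlib

section
/- For every 4-tuple of natural numbers v₁ < v₂ < v₃ < v₄, if δ(v₁,v₂) > δ(v₂,v₃), then δ(v₁,v₂) ≠ δ(v₃,v₄). -/
/-- `delta u v` is the largest index `i` such that the `i`-th binary digits of `u` and `v`
differ. -/
noncomputable def delta (u v : ℕ) : ℕ := sSup {i | u.testBit i ≠ v.testBit i}

lemma delta_bdd (u v : ℕ) : BddAbove {i | u.testBit i ≠ v.testBit i} := by
  refine ⟨u + v, fun i hi => ?_⟩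
  by_contra hlt
  push_neg at hlt
  have h2 : u + v < 2 ^ i := lt_trans hlt (Nat.lt_two_pow_self (n := i))
  have hu : u.testBit i = false :=
    Nat.testBit_lt_two_pow (lt_of_le_of_lt (Nat.le_add_right u v) h2)
  have hv : v.testBit i = false :=
    Nat.testBit_lt_two_pow (lt_of_le_of_lt (Nat.le_add_left v u) h2)
  exact hi (hu.trans hv.symm)

lemma delta_mem {u v : ℕ} (h : u ≠ v) :
    u.testBit (delta u v) ≠ v.testBit (delta u v) := by
  have hne : {i | u.testBit i ≠ v.testBit i}.Nonempty := by
    by_contra hne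
    rw [Set.not_nonempty_iff_eq_empty] at hne
    refine h (Nat.eq_of_testBit_eq fun i => ?_)
    by_contra hi
    exact Set.eq_empty_iff_forall_notMem.mp hne i hi
  exact Nat.sSup_mem hne (delta_bdd u v)

lemma delta_high {u v i : ℕ} (hi : delta u v < i) : u.testBit i = v.testBit i := by
  by_contra hne
  exact absurd (le_csSup (delta_bdd u v) hne) (not_le_of_gt hi)

lemma delta_bits {u v : ℕ} (h : u < v) :
    u.testBit (delta u v) = false ∧ v.testBit (delta u v) = true := by
  have hne := delta_mem h.ne
  cases hu : u.testBit (delta u v) with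
  | false =>
    refine ⟨rfl, ?_⟩
    cases hv : v.testBit (delta u v)
    · rw [hu, hv] at hne; exact absurd rfl hne
    · rfl
  | true =>
    exfalso
    cases hv : v.testBit (delta u v) with
    | true => rw [hu, hv] at hne; exact absurd rfl hne
    | false =>
      have : v < u := Nat.lt_of_testBit _ hv hu fun j hj => (delta_high hj).symm
      exact absurd h (not_lt_of_gt this)

theorem stmt2 (v1 v2 v3 v4 : ℕ) (h12 : v1 < v2) (h23 : v2 < v3) (h34 : v3 < v4)
    (h : delta v2 v3 < delta v1 v2) : delta v1 v2 ≠ delta v3 v4 := by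
  intro heq
  have h2d : v2.testBit (delta v1 v2) = true := (delta_bits h12).2
  have h23d : v2.testBit (delta v1 v2) = v3.testBit (delta v1 v2) := delta_high h
  have h3d : v3.testBit (delta v3 v4) = false := (delta_bits h34).1
  rw [← heq] at h3d
  rw [h23d, h3d] at h2d
  exact Bool.false_ne_true h2d
end

section
/- If a sequence a₁, …, a_m of natural numbers satisfies a_j ≠ a_{j+1} for all j and contains no monotone (weakly increasing or weakly decreasing) run of length n (i.e., no n consecutive terms forming a monotone subsequence), and m ≥ n·t, then the sequence contains at least t local extrema, where a_j (for 2 ≤ j ≤ m−1) is a local extremum if a_{j−1} < a_j > a_{j+1} or a_{j−1} > a_j < a_{j+1}. -/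
lemma exists_switch (P : ℕ → Prop) (s c : ℕ)
    (h1 : ¬ ∀ l, s ≤ l → l + 1 < c → P l)
    (h2 : ¬ ∀ l, s ≤ l → l + 1 < c → ¬ P l) :
    ∃ l, s ≤ l ∧ l + 2 < c ∧ ((P l ∧ ¬ P (l+1)) ∨ (¬ P l ∧ P (l+1))) := by
  by_contra h
  push_neg at h
  have hiff : ∀ l, s ≤ l → l + 2 < c → (P l ↔ P (l+1)) := by
    intro l hl hlc
    have := h l hl hlc
    tauto
  have hconst : ∀ l, s ≤ l → l + 1 < c → (P l ↔ P s) := by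
    intro l hl
    induction l, hl using Nat.le_induction with
    | base => intro _; rfl
    | succ l hl ih =>
      intro hc
      have hiff' := hiff l hl (by omega)
      rw [← hiff']
      exact ih (by omega)
  push_neg at h1 h2
  obtain ⟨l1, hs1, hc1, hp1⟩ := h1
  obtain ⟨l2, hs2, hc2, hp2⟩ := h2
  rw [hconst l1 hs1 hc1] at hp1
  rw [hconst l2 hs2 hc2] at hp2
  exact hp1 hp2

/-- A sequence `a 1, …, a m` (1-indexed, with consecutive terms distinct) that contains no
monotone run of `n` consecutive terms, with `m ≥ n * t`, has at least `t` local extrema. -/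
theorem stmt5 (n t m : ℕ) (a : ℕ → ℕ)
    (hne : ∀ j, 1 ≤ j → j + 1 ≤ m → a j ≠ a (j + 1))
    (hrun : ¬ ∃ j, 1 ≤ j ∧ j + n ≤ m + 1 ∧
      ((∀ l, j ≤ l → l + 1 < j + n → a l < a (l + 1)) ∨
       (∀ l, j ≤ l → l + 1 < j + n → a (l + 1) < a l)))
    (hm : n * t ≤ m) :
    t ≤ ((Finset.Icc 1 m).filter (fun j =>
      2 ≤ j ∧ j + 1 ≤ m ∧
        ((a (j - 1) < a j ∧ a (j + 1) < a j) ∨ (a j < a (j - 1) ∧ a j < a (j + 1))))).card := by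
  rcases Nat.eq_zero_or_pos t with ht | ht
  · subst ht; exact Nat.zero_le _
  have hnm : n ≤ m := le_trans (Nat.le_mul_of_pos_right n ht) hm
  have key : ∀ i, i < t → ∃ j, i*n+2 ≤ j ∧ j + 1 ≤ (i+1)*n ∧
      (2 ≤ j ∧ j + 1 ≤ m ∧
        ((a (j - 1) < a j ∧ a (j + 1) < a j) ∨ (a j < a (j - 1) ∧ a j < a (j + 1)))) := by
    intro i hi
    have hblock : (i+1)*n ≤ m := by
      calc (i+1)*n ≤ t*n := Nat.mul_le_mul_right n hi
        _ = n*t := Nat.mul_comm t n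
        _ ≤ m := hm
    have hexp : (i+1)*n = i*n + n := by ring
    have hA : ¬ ∀ l, i*n+1 ≤ l → l + 1 < (i*n+1) + n → a l < a (l+1) :=
      fun hA => hrun ⟨i*n+1, by omega, by omega, Or.inl hA⟩
    have hB : ¬ ∀ l, i*n+1 ≤ l → l + 1 < (i*n+1) + n → a (l+1) < a l :=
      fun hB => hrun ⟨i*n+1, by omega, by omega, Or.inr hB⟩
    have hB' : ¬ ∀ l, i*n+1 ≤ l → l + 1 < (i*n+1) + n → ¬ a l < a (l+1) := by
      intro hB'
      apply hB
      intro l hl hlc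
      have h1 := hne l (by omega) (by omega)
      have h2 := hB' l hl hlc
      omega
    obtain ⟨l, hl, hlc, hsw⟩ := exists_switch (fun l => a l < a (l+1)) (i*n+1) ((i*n+1)+n) hA hB'
    have h1 := hne l (by omega) (by omega)
    have h2 := hne (l+1) (by omega) (by omega)
    refine ⟨l+1, by omega, by omega, by omega, by omega, ?_⟩
    simp only [Nat.add_sub_cancel]
    rcases hsw with ⟨h3, h4⟩ | ⟨h3, h4⟩
    · exact Or.inl ⟨h3, by omega⟩
    · exact Or.inr ⟨by omega, by omega⟩
  choose! F hF1 hF2 hF3 using key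
  have hmem : ∀ i ∈ Finset.range t, F i ∈ (Finset.Icc 1 m).filter (fun j =>
      2 ≤ j ∧ j + 1 ≤ m ∧
        ((a (j - 1) < a j ∧ a (j + 1) < a j) ∨ (a j < a (j - 1) ∧ a j < a (j + 1)))) := by
    intro i hi
    simp only [Finset.mem_range] at hi
    obtain ⟨h2, h3, h4⟩ := hF3 i hi
    simp only [Finset.mem_filter, Finset.mem_Icc]
    exact ⟨⟨by omega, by omega⟩, h2, h3, h4⟩
  have hinj : Set.InjOn F (Finset.range t) := by
    intro i hi i' hi' heq
    simp only [Finset.coe_range, Set.mem_Iio] at hi hi'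
    by_contra hne'
    rcases Nat.lt_or_ge i i' with h | h
    · have b1 := hF2 i hi
      have b2 := hF1 i' hi'
      have hmul : (i+1)*n ≤ i'*n := Nat.mul_le_mul_right n h
      omega
    · have hlt : i' < i := by omega
      have b1 := hF2 i' hi'
      have b2 := hF1 i hi
      have hmul : (i'+1)*n ≤ i*n := Nat.mul_le_mul_right n hlt
      omega
  have hcard := Finset.card_le_card_of_injOn F hmem hinj
  simpa using hcard
end

section
/- Let n ≥ 1 and let b : Fin m → ℕ be a sequence with m ≥ 16n² of pairwise distinct values. Suppose there is no index k with 4n < k ≤ m − 4n such that b_ℓ < b_k for all ℓ ≠ k with k − 4n ≤ ℓ ≤ k + 4n. Then there exist indices s₁ < s₂ < ⋯ < s_n such that b_{s₁} > b_{s₂} > ⋯ > b_{s_n} and b_{s_i} > b_ℓ for all s_i < ℓ ≤ s_n, or there exist indices t₁ < ⋯ < t_n such that b_{t₁} < b_{t₂} < ⋯ < b_{t_n} and b_{t_i} > b_ℓ for all t₁ ≤ ℓ < t_i. -/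
private lemma key (n m : ℕ) (hn : 1 ≤ n) (b : ℕ → ℕ)
    (hinj : ∀ i j, 1 ≤ i → i ≤ m → 1 ≤ j → j ≤ m → i ≠ j → b i ≠ b j)
    (hpeak : ¬ ∃ k, 4 * n < k ∧ k ≤ m - 4 * n ∧
      ∀ l, k - 4 * n ≤ l → l ≤ k + 4 * n → l ≠ k → b l < b k)
    (d : ℕ) :
    ∀ i j a c, i + j ≤ d → 1 ≤ a → c ≤ m → a + 4 * n * (i + j) ≤ c + 1 →
    (∃ (s : Fin i → ℕ) (e : ℕ), StrictMono s ∧ (∀ k, a ≤ s k ∧ s k ≤ e) ∧ e ≤ c ∧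
      (∀ k k' : Fin i, k < k' → b (s k') < b (s k)) ∧
      (∀ (k : Fin i) (l : ℕ), s k < l → l ≤ e → b l < b (s k))) ∨
    (∃ (t : Fin j → ℕ) (e : ℕ), StrictMono t ∧ (∀ k, e ≤ t k ∧ t k ≤ c) ∧ a ≤ e ∧
      (∀ k k' : Fin j, k < k' → b (t k) < b (t k')) ∧
      (∀ (k : Fin j) (l : ℕ), e ≤ l → l < t k → b l < b (t k))) := by
  induction d with
  | zero =>
    intro i j a c hd ha hc hlen
    have hi : i = 0 := by omega
    subst hi
    exact Or.inl ⟨Fin.elim0, 0, fun k => k.elim0, fun k => k.elim0, Nat.zero_le c,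
      fun k => k.elim0, fun k => k.elim0⟩
  | succ d ih =>
    intro i j a c hd ha hc hlen
    rcases i with _ | i'
    · exact Or.inl ⟨Fin.elim0, 0, fun k => k.elim0, fun k => k.elim0, Nat.zero_le c,
        fun k => k.elim0, fun k => k.elim0⟩
    rcases j with _ | j'
    · exact Or.inr ⟨Fin.elim0, a, fun k => k.elim0, fun k => k.elim0, le_refl a,
        fun k => k.elim0, fun k => k.elim0⟩
    have hmul : 4 * n * (i' + 1 + (j' + 1)) = 4 * n * (i' + j') + 4 * n + 4 * n := by ring
    have hac : a ≤ c := by omega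
    obtain ⟨p, hp_mem, hp_max⟩ := Finset.exists_max_image (Finset.Icc a c) b
      ⟨a, by simp [Finset.mem_Icc]; omega⟩
    rw [Finset.mem_Icc] at hp_mem
    obtain ⟨hpa, hpc⟩ := hp_mem
    have hstrict : ∀ l, a ≤ l → l ≤ c → l ≠ p → b l < b p := by
      intro l h1 h2 hne
      exact lt_of_le_of_ne (hp_max l (by rw [Finset.mem_Icc]; omega))
        (hinj l p (by omega) (by omega) (by omega) (by omega) hne)
    by_cases hL : p < a + 4 * n
    · -- left event: prepend p to decreasing chain on [p+1, c]
      have hlen' : p + 1 + 4 * n * (i' + (j' + 1)) ≤ c + 1 := by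
        have : 4 * n * (i' + (j' + 1)) + 4 * n = 4 * n * (i' + 1 + (j' + 1)) := by ring
        omega
      rcases ih i' (j' + 1) (p + 1) c (by omega) (by omega) hc hlen' with
        ⟨s, e, hmono, hbnd, hec, hdec, hdom⟩ | ⟨t, e, hmono, hbnd, hae, hinc, hdom⟩
      · refine Or.inl ⟨fun k => if h : (k : ℕ) = 0 then p else s ⟨(k : ℕ) - 1, by omega⟩,
          max p e, ?_, ?_, ?_, ?_, ?_⟩
        · intro k k' hkk'
          rw [Fin.lt_def] at hkk'
          by_cases h : (k : ℕ) = 0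
          · have h' : ¬ ((k' : ℕ) = 0) := by omega
            simp only [dif_pos h, dif_neg h']
            exact lt_of_lt_of_le (by omega) (hbnd ⟨(k' : ℕ) - 1, by omega⟩).1
          · have h' : ¬ ((k' : ℕ) = 0) := by omega
            simp only [dif_neg h, dif_neg h']
            exact hmono (by rw [Fin.lt_def]; simp; omega)
        · intro k
          by_cases h : (k : ℕ) = 0
          · simp only [dif_pos h]; omega
          · simp only [dif_neg h]
            have := hbnd ⟨(k : ℕ) - 1, by omega⟩
            omega
        · omega
        · intro k k' hkk'
          rw [Fin.lt_def] at hkk'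
          have h' : ¬ ((k' : ℕ) = 0) := by omega
          by_cases h : (k : ℕ) = 0
          · simp only [dif_pos h, dif_neg h']
            have h1 := hbnd ⟨(k' : ℕ) - 1, by omega⟩
            exact hstrict _ (by omega) (by omega) (by omega)
          · simp only [dif_neg h, dif_neg h']
            exact hdec _ _ (by rw [Fin.lt_def]; simp; omega)
        · intro k l hl1 hl2
          by_cases h : (k : ℕ) = 0
          · simp only [dif_pos h] at hl1 ⊢
            exact hstrict _ (by omega) (by omega) (by omega)
          · simp only [dif_neg h] at hl1 ⊢
            have h1 := hbnd ⟨(k : ℕ) - 1, by omega⟩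
            exact hdom _ _ hl1 (by omega)
      · exact Or.inr ⟨t, e, hmono, hbnd, by omega, hinc, hdom⟩
    by_cases hR : c < p + 4 * n
    · -- right event: append p to increasing chain on [a, p-1]
      have hp1 : a + 4 * n ≤ p := by omega
      have hlen' : a + 4 * n * (i' + 1 + j') ≤ (p - 1) + 1 := by
        have : 4 * n * (i' + 1 + j') + 4 * n = 4 * n * (i' + 1 + (j' + 1)) := by ring
        omega
      rcases ih (i' + 1) j' a (p - 1) (by omega) ha (by omega) hlen' with
        ⟨s, e, hmono, hbnd, hec, hdec, hdom⟩ | ⟨t, e, hmono, hbnd, hae, hinc, hdom⟩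
      · exact Or.inl ⟨s, e, hmono, hbnd, by omega, hdec, hdom⟩
      · refine Or.inr ⟨fun k => if h : (k : ℕ) < j' then t ⟨(k : ℕ), h⟩ else p,
          min p e, ?_, ?_, ?_, ?_, ?_⟩
        · intro k k' hkk'
          rw [Fin.lt_def] at hkk'
          by_cases h' : (k' : ℕ) < j'
          · have h : (k : ℕ) < j' := by omega
            simp only [dif_pos h, dif_pos h']
            exact hmono (by rw [Fin.lt_def]; simp; omega)
          · have h : (k : ℕ) < j' := by omega
            simp only [dif_pos h, dif_neg h']
            have := (hbnd ⟨(k : ℕ), h⟩).2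
            omega
        · intro k
          by_cases h : (k : ℕ) < j'
          · simp only [dif_pos h]
            have := hbnd ⟨(k : ℕ), h⟩
            omega
          · simp only [dif_neg h]; omega
        · omega
        · intro k k' hkk'
          rw [Fin.lt_def] at hkk'
          have h : (k : ℕ) < j' := by omega
          by_cases h' : (k' : ℕ) < j'
          · simp only [dif_pos h, dif_pos h']
            exact hinc _ _ (by rw [Fin.lt_def]; simp; omega)
          · simp only [dif_pos h, dif_neg h']
            have h1 := hbnd ⟨(k : ℕ), h⟩
            exact hstrict _ (by omega) (by omega) (by omega)
        · intro k l hl1 hl2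
          by_cases h : (k : ℕ) < j'
          · simp only [dif_pos h] at hl2 ⊢
            have h1 := hbnd ⟨(k : ℕ), h⟩
            exact hdom _ _ (by omega) hl2
          · simp only [dif_neg h] at hl2 ⊢
            exact hstrict _ (by omega) (by omega) (by omega)
    exfalso
    exact hpeak ⟨p, by omega, by omega, fun l h1 h2 h3 => hstrict l (by omega) (by omega) h3⟩


/-- A sequence of `m ≥ 16n²` pairwise distinct natural numbers (1-indexed) with no
`4n`-dominant peak contains a strictly decreasing dominating subsequence of length `n` or a
strictly increasing dominating subsequence of length `n`. -/
theorem stmt6 (n m : ℕ) (hn : 1 ≤ n) (hm : 16 * n ^ 2 ≤ m) (b : ℕ → ℕ)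
    (hinj : ∀ i j, 1 ≤ i → i ≤ m → 1 ≤ j → j ≤ m → i ≠ j → b i ≠ b j)
    (hpeak : ¬ ∃ k, 4 * n < k ∧ k ≤ m - 4 * n ∧
      ∀ l, k - 4 * n ≤ l → l ≤ k + 4 * n → l ≠ k → b l < b k) :
    (∃ s : Fin n → ℕ, StrictMono s ∧ (∀ i, 1 ≤ s i ∧ s i ≤ m) ∧
      (∀ i j : Fin n, i < j → b (s j) < b (s i)) ∧
      (∀ (i : Fin n) (l : ℕ), s i < l → l ≤ s ⟨n - 1, by omega⟩ → b l < b (s i))) ∨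
    (∃ t : Fin n → ℕ, StrictMono t ∧ (∀ i, 1 ≤ t i ∧ t i ≤ m) ∧
      (∀ i j : Fin n, i < j → b (t i) < b (t j)) ∧
      (∀ (i : Fin n) (l : ℕ), t ⟨0, by omega⟩ ≤ l → l < t i → b l < b (t i))) := by
  have hlen : 1 + 4 * n * (n + n) ≤ m + 1 := by
    have : 4 * n * (n + n) = 8 * n ^ 2 := by ring
    omega
  rcases key n m hn b hinj hpeak (n + n) n n 1 m le_rfl le_rfl le_rfl hlen with
    ⟨s, e, hmono, hbnd, hec, hdec, hdom⟩ | ⟨t, e, hmono, hbnd, hae, hinc, hdom⟩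
  · refine Or.inl ⟨s, hmono, fun k => ⟨(hbnd k).1, le_trans (hbnd k).2 hec⟩, hdec, ?_⟩
    intro k l h1 h2
    exact hdom k l h1 (le_trans h2 (hbnd ⟨n - 1, by omega⟩).2)
  · refine Or.inr ⟨t, hmono, fun k => ⟨le_trans hae (hbnd k).1, (hbnd k).2⟩, hinc, ?_⟩
    intro k l h1 h2
    exact hdom k l (le_trans (hbnd ⟨0, by omega⟩).1 h1) h2
end

section
/- For all sufficiently large n, there exists a 2-coloring (red/blue) of the pairs of {0,1,…,⌊2^{cn}⌋} (for some absolute constant c > 0) such that there are no three pairwise disjoint n-element subsets A, B, C together with a bijection f : B → C such that for every a ∈ A and b ∈ B, at least one of φ(a,b) = red or φ(a,f(b)) = blue holds. -/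
open Finset

lemma count_lemma {ι X : Type*} [DecidableEq ι] [DecidableEq X] [Fintype X]
    (I : Finset ι) (w : ι × Bool → X) (S : Finset (X → Bool))
    (hw : Set.InjOn w (I ×ˢ (Finset.univ : Finset Bool)))
    (hS : ∀ g ∈ S, ∀ i ∈ I, g (w (i, true)) = true ∨ g (w (i, false)) = false) :
    S.card ≤ 3 ^ I.card * 2 ^ (Fintype.card X - 2 * I.card) := by
  classical
  set T : Finset X := (I ×ˢ (Finset.univ : Finset Bool)).image w with hT
  have hTcard : T.card = 2 * I.card := by
    rw [hT, Finset.card_image_of_injOn (by simpa using hw), Finset.card_product]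
    simp [mul_comm]
  set allowed : Finset (Bool × Bool) := {(true, true), (true, false), (false, false)} with hallow
  have key := Finset.card_le_card_of_injOn
    (s := S)
    (t := (I.pi fun _ => allowed) ×ˢ ((Finset.univ \ T).pi fun _ => (Finset.univ : Finset Bool)))
    (fun g => (fun i _ => (g (w (i, true)), g (w (i, false))), fun x _ => g x))
    ?_ ?_
  · refine key.trans_eq ?_
    rw [Finset.card_product, Finset.card_pi, Finset.card_pi]
    rw [Finset.prod_const, Finset.prod_const]
    have h1 : allowed.card = 3 := by decide
    have h2 : (Finset.univ \ T).card = Fintype.card X - 2 * I.card := by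
      rw [Finset.card_sdiff_of_subset (Finset.subset_univ T), hTcard, Finset.card_univ]
    rw [h1, h2, Finset.card_univ, Fintype.card_bool]
  · intro g hg
    have hg2 := hS g hg
    rw [Finset.mem_coe, Finset.mem_product]
    constructor
    · rw [Finset.mem_pi]
      intro i hi
      simp only
      rcases hg2 i hi with h | h <;>
        rcases Bool.dichotomy (g (w (i, false))) with h' | h' <;>
          rcases Bool.dichotomy (g (w (i, true))) with h'' | h'' <;>
            simp_all [hallow] <;> decide
    · rw [Finset.mem_pi]; intro x hx; exact Finset.mem_univ _
  · intro g hg g' hg' heq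
    rw [Prod.mk.injEq] at heq
    funext x
    by_cases hx : x ∈ T
    · rw [hT, Finset.mem_image] at hx
      obtain ⟨⟨i, s⟩, hi, rfl⟩ := hx
      rw [Finset.mem_product] at hi
      have := congrFun (congrFun heq.1 i) hi.1
      rw [Prod.mk.injEq] at this
      cases s
      · exact this.2
      · exact this.1
    · exact congrFun (congrFun heq.2 x) (Finset.mem_sdiff.2 ⟨Finset.mem_univ _, hx⟩)

lemma pow_aux : ∀ k, 20 ≤ k → 200 * k + 201 ≤ 2 ^ k := by
  intro k hk
  induction k with
  | zero => omega
  | succ m ih =>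
    rcases Nat.lt_or_ge m 20 with h | h
    · have hm : m = 19 := by omega
      subst hm; norm_num
    · have := ih (by omega)
      have h2 : 2 ^ (m + 1) = 2 * 2 ^ m := by ring
      omega

lemma num_ineq (m : ℕ) (hm : 1 ≤ m) : 2 ^ (m / 16) * 3 ^ m < 2 ^ (2 * m) := by
  have h16 : (2 ^ (m / 16) * 3 ^ m) ^ 16 < (2 ^ (2 * m)) ^ 16 := by
    have h1 : (2 ^ (m / 16) * 3 ^ m) ^ 16 = 2 ^ (16 * (m / 16)) * (3 ^ 16) ^ m := by
      rw [mul_pow, ← pow_mul, ← pow_mul, ← pow_mul]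
      ring_nf
    have h2 : 2 ^ (16 * (m / 16)) ≤ 2 ^ m :=
      Nat.pow_le_pow_right (by norm_num) (Nat.mul_div_le m 16)
    have h3 : (3 ^ 16 : ℕ) ^ m < (2 ^ 26 : ℕ) ^ m :=
      Nat.pow_lt_pow_left (by norm_num) (by omega)
    calc (2 ^ (m / 16) * 3 ^ m) ^ 16 = 2 ^ (16 * (m / 16)) * (3 ^ 16) ^ m := h1
      _ ≤ 2 ^ m * (3 ^ 16) ^ m := by gcongr
      _ < 2 ^ m * (2 ^ 26) ^ m := by
          have hpos : 0 < 2 ^ m := Nat.pow_pos (by norm_num)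
          exact mul_lt_mul_of_pos_left h3 hpos
      _ = 2 ^ (m + 26 * m) := by rw [← pow_mul, ← pow_add]
      _ ≤ 2 ^ (32 * m) := Nat.pow_le_pow_right (by norm_num) (by omega)
      _ = (2 ^ (2 * m)) ^ 16 := by rw [← pow_mul]; ring_nf
  exact lt_of_pow_lt_pow_left₀ 16 (Nat.zero_le _) h16

/-- For all sufficiently large `n`, there is a red/blue coloring (`true` = red) of the pairs of
`{0, 1, …, ⌊2^(c*n)⌋}` with no three pairwise disjoint `n`-sets `A, B, C` and bijection
`f : B → C` such that for all `a ∈ A`, `b ∈ B`, `φ a b` is red or `φ a (f b)` is blue. -/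
theorem stmt7 :
    ∃ c : ℝ, 0 < c ∧ ∃ n₀ : ℕ, ∀ n : ℕ, n₀ ≤ n →
      ∃ φ : ℕ → ℕ → Bool, (∀ a b, φ a b = φ b a) ∧
        ¬ ∃ (A B C : Finset ℕ) (f : ℕ → ℕ),
          A ⊆ Finset.range (⌊(2 : ℝ) ^ (c * n)⌋₊ + 1) ∧
          B ⊆ Finset.range (⌊(2 : ℝ) ^ (c * n)⌋₊ + 1) ∧
          C ⊆ Finset.range (⌊(2 : ℝ) ^ (c * n)⌋₊ + 1) ∧
          A.card = n ∧ B.card = n ∧ C.card = n ∧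
          Disjoint A B ∧ Disjoint A C ∧ Disjoint B C ∧
          Set.BijOn f ↑B ↑C ∧
          ∀ a ∈ A, ∀ b ∈ B, φ a b = true ∨ φ a (f b) = false := by
  classical
  refine ⟨1/100, by norm_num, 2000, ?_⟩
  intro n hn
  set M : ℕ := ⌊(2 : ℝ) ^ ((1/100 : ℝ) * n)⌋₊ + 1 with hMdef
  -- bounds on M
  have hq : n / 100 ≥ 20 := by omega
  have hlow : 2 ^ (n / 100) + 1 ≤ M := by
    have h1 : ((n / 100 : ℕ) : ℝ) ≤ (1/100 : ℝ) * n := by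
      have h := Nat.div_mul_le_self n 100
      have h' : ((n / 100 : ℕ) : ℝ) * 100 ≤ (n : ℝ) := by exact_mod_cast h
      linarith
    have h2 : (2 : ℕ) ^ (n / 100) ≤ ⌊(2 : ℝ) ^ ((1/100 : ℝ) * n)⌋₊ := by
      apply Nat.le_floor
      push_cast
      calc ((2 : ℝ) ^ (n / 100 : ℕ)) = (2 : ℝ) ^ ((n / 100 : ℕ) : ℝ) :=
            (Real.rpow_natCast 2 _).symm
        _ ≤ _ := Real.rpow_le_rpow_of_exponent_le (by norm_num) h1
    omega
  have hup : M ≤ 2 ^ (n / 50) := by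
    have h1 : (1/100 : ℝ) * n ≤ ((n / 100 + 1 : ℕ) : ℝ) := by
      have h : n < 100 * (n / 100) + 100 := by omega
      have h' : (n : ℝ) < 100 * ((n / 100 : ℕ) : ℝ) + 100 := by exact_mod_cast h
      push_cast
      linarith
    have h2 : ⌊(2 : ℝ) ^ ((1/100 : ℝ) * n)⌋₊ ≤ 2 ^ (n / 100 + 1) := by
      have : (2 : ℝ) ^ ((1/100 : ℝ) * n) ≤ ((2 ^ (n / 100 + 1) : ℕ) : ℝ) := by
        push_cast
        calc (2 : ℝ) ^ ((1/100 : ℝ) * n) ≤ (2 : ℝ) ^ ((n / 100 + 1 : ℕ) : ℝ) :=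
              Real.rpow_le_rpow_of_exponent_le (by norm_num) h1
          _ = (2 : ℝ) ^ (n / 100 + 1 : ℕ) := Real.rpow_natCast 2 _
          _ = _ := by push_cast; ring
      calc ⌊(2 : ℝ) ^ ((1/100 : ℝ) * n)⌋₊ ≤ ⌊((2 ^ (n / 100 + 1) : ℕ) : ℝ)⌋₊ :=
            Nat.floor_le_floor this
        _ = 2 ^ (n / 100 + 1) := Nat.floor_natCast _
    have h3 : M ≤ 2 ^ (n / 100 + 1) + 1 := by omega
    have h4 : 2 ^ (n / 100 + 1) + 1 ≤ 2 ^ (n / 100 + 2) := by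
      have : 1 ≤ 2 ^ (n / 100 + 1) := Nat.one_le_two_pow
      have : 2 ^ (n / 100 + 2) = 2 ^ (n / 100 + 1) + 2 ^ (n / 100 + 1) := by ring
      omega
    have h5 : n / 100 + 2 ≤ n / 50 := by omega
    exact h3.trans (h4.trans (Nat.pow_le_pow_right (by norm_num) h5))
  have hM2n : 2 * n + 1 ≤ M := by
    have h1 : 2 * n + 1 ≤ 200 * (n / 100) + 201 := by omega
    have h2 := pow_aux (n / 100) hq
    omega
  -- edge counting
  set E : ℕ := Fintype.card (Sym2 (Fin M)) with hEdef
  have hE : 2 * n ^ 2 ≤ E := by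
    have h1 : E = (M + 1).choose 2 := by
      rw [hEdef, Sym2.card, Fintype.card_fin]
    have h2 : (2 * n + 2).choose 2 ≤ (M + 1).choose 2 :=
      Nat.choose_le_choose 2 (by omega)
    have h3 : (2 * n + 2).choose 2 = (n + 1) * (2 * n + 1) := by
      rw [Nat.choose_two_right]
      have h4 : (2 * n + 2) * (2 * n + 2 - 1) = 2 * ((n + 1) * (2 * n + 1)) := by
        have : 2 * n + 2 - 1 = 2 * n + 1 := by omega
        rw [this]; ring
      rw [h4, Nat.mul_div_cancel_left _ (by norm_num)]
    have h5 : 2 * n ^ 2 ≤ (n + 1) * (2 * n + 1) := by nlinarith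
    omega
  -- the bad set
  set Cond : Finset (Fin M) → Finset (Fin M × Fin M) → Prop := fun A P =>
    A.card = n ∧ P.card = n ∧ Set.InjOn Prod.fst (P : Set (Fin M × Fin M)) ∧
    Set.InjOn Prod.snd (P : Set (Fin M × Fin M)) ∧
    Disjoint A (P.image Prod.fst) ∧ Disjoint A (P.image Prod.snd) ∧
    Disjoint (P.image Prod.fst) (P.image Prod.snd) with hCond
  set BadFor : Finset (Fin M) → Finset (Fin M × Fin M) → (Sym2 (Fin M) → Bool) → Prop :=
    fun A P g => ∀ a ∈ A, ∀ p ∈ P, g s(a, p.1) = true ∨ g s(a, p.2) = false with hBadFor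
  set Bad : Finset (Sym2 (Fin M) → Bool) :=
    Finset.univ.filter (fun g => ∃ A P, Cond A P ∧ BadFor A P g) with hBad
  -- per-config bound
  have perconfig : ∀ A P, Cond A P →
      (Finset.univ.filter (fun g : Sym2 (Fin M) → Bool => Cond A P ∧ BadFor A P g)).card
        ≤ 3 ^ (n ^ 2) * 2 ^ (E - 2 * n ^ 2) := by
    intro A P hCP
    obtain ⟨hcA, hcP, hfst, hsnd, hd1, hd2, hd3⟩ := hCP
    have hAB : ∀ a ∈ A, ∀ p ∈ P, a ≠ p.1 := by
      intro a ha p hp h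
      exact (Finset.disjoint_left.1 hd1) ha (Finset.mem_image.2 ⟨p, hp, h.symm⟩)
    have hAC : ∀ a ∈ A, ∀ p ∈ P, a ≠ p.2 := by
      intro a ha p hp h
      exact (Finset.disjoint_left.1 hd2) ha (Finset.mem_image.2 ⟨p, hp, h.symm⟩)
    have hBC : ∀ p ∈ P, ∀ p' ∈ P, p.1 ≠ p'.2 := by
      intro p hp p' hp' h
      exact (Finset.disjoint_left.1 hd3) (Finset.mem_image.2 ⟨p, hp, rfl⟩)
        (Finset.mem_image.2 ⟨p', hp', h.symm⟩)
    set w : (Fin M × (Fin M × Fin M)) × Bool → Sym2 (Fin M) :=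
      fun q => cond q.2 s(q.1.1, q.1.2.1) s(q.1.1, q.1.2.2) with hw
    have hwinj : Set.InjOn w (((A ×ˢ P : Finset (Fin M × (Fin M × Fin M))) : Set _) ×ˢ
        ((Finset.univ : Finset Bool) : Set Bool)) := by
      rintro ⟨⟨a, p⟩, s⟩ hq ⟨⟨a', p'⟩, s'⟩ hq' heq
      simp only [Set.mem_prod, Finset.mem_coe, Finset.mem_product] at hq hq'
      obtain ⟨⟨ha, hp⟩, -⟩ := hq
      obtain ⟨⟨ha', hp'⟩, -⟩ := hq'
      cases s <;> cases s' <;>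
        simp only [hw, Bool.cond_true, Bool.cond_false, Sym2.eq_iff] at heq
      · rcases heq with ⟨rfl, h2⟩ | ⟨h1, h2⟩
        · have := hsnd hp hp' h2
          subst this; rfl
        · exact absurd h1 (hAC a ha p' hp')
      · rcases heq with ⟨rfl, h2⟩ | ⟨h1, h2⟩
        · exact absurd h2.symm (hBC p' hp' p hp)
        · exact absurd h1 (hAB a ha p' hp')
      · rcases heq with ⟨rfl, h2⟩ | ⟨h1, h2⟩
        · exact absurd h2 (hBC p hp p' hp')
        · exact absurd h1 (hAC a ha p' hp')
      · rcases heq with ⟨rfl, h2⟩ | ⟨h1, h2⟩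
        · have := hfst hp hp' h2
          subst this; rfl
        · exact absurd h1 (hAB a ha p' hp')
    have hIcard : (A ×ˢ P).card = n ^ 2 := by
      rw [Finset.card_product, hcA, hcP]; ring
    have hcl := count_lemma (A ×ˢ P) w
      (Finset.univ.filter (fun g : Sym2 (Fin M) → Bool => Cond A P ∧ BadFor A P g)) hwinj
      (fun g hgm i hi =>
        (Finset.mem_filter.1 hgm).2.2 i.1 (Finset.mem_product.1 hi).1 i.2
          (Finset.mem_product.1 hi).2)
    rw [hIcard] at hcl
    refine le_trans hcl (le_of_eq ?_)
    rw [hEdef]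
  -- union bound
  have hBadcard : Bad.card < 2 ^ E := by
    set Cfg : Finset (Finset (Fin M) × Finset (Fin M × Fin M)) :=
      Finset.univ.powersetCard n ×ˢ Finset.univ.powersetCard n with hCfg
    have hsub : Bad ⊆ Cfg.biUnion
        (fun K => Finset.univ.filter (fun g => Cond K.1 K.2 ∧ BadFor K.1 K.2 g)) := by
      intro g hgm
      rw [hBad, Finset.mem_filter] at hgm
      obtain ⟨-, A, P, hCP, hBf⟩ := hgm
      apply Finset.mem_biUnion.2
      refine ⟨(A, P), ?_, Finset.mem_filter.2 ⟨Finset.mem_univ _, hCP, hBf⟩⟩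
      rw [hCfg, Finset.mem_product]
      exact ⟨Finset.mem_powersetCard_univ.2 hCP.1, Finset.mem_powersetCard_univ.2 hCP.2.1⟩
    have h1 : Bad.card ≤ ∑ K ∈ Cfg,
        (Finset.univ.filter (fun g => Cond K.1 K.2 ∧ BadFor K.1 K.2 g)).card :=
      (Finset.card_le_card hsub).trans (Finset.card_biUnion_le)
    have h2 : ∀ K ∈ Cfg,
        (Finset.univ.filter (fun g => Cond K.1 K.2 ∧ BadFor K.1 K.2 g)).card
          ≤ 3 ^ (n ^ 2) * 2 ^ (E - 2 * n ^ 2) := by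
      intro K _
      by_cases hCP : Cond K.1 K.2
      · exact perconfig K.1 K.2 hCP
      · have hemp : (Finset.univ.filter (fun g => Cond K.1 K.2 ∧ BadFor K.1 K.2 g)) = ∅ := by
          apply Finset.filter_false_of_mem
          intro g _
          exact fun hc => hCP hc.1
        rw [hemp]
        simp
    have h3 : Bad.card ≤ Cfg.card * (3 ^ (n ^ 2) * 2 ^ (E - 2 * n ^ 2)) := by
      calc Bad.card ≤ ∑ K ∈ Cfg,
          (Finset.univ.filter (fun g => Cond K.1 K.2 ∧ BadFor K.1 K.2 g)).card := h1
        _ ≤ ∑ _K ∈ Cfg, 3 ^ (n ^ 2) * 2 ^ (E - 2 * n ^ 2) := Finset.sum_le_sum h2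
        _ = Cfg.card * (3 ^ (n ^ 2) * 2 ^ (E - 2 * n ^ 2)) := by
            rw [Finset.sum_const, smul_eq_mul]
    have h4 : Cfg.card ≤ M ^ (3 * n) := by
      rw [hCfg, Finset.card_product, Finset.card_powersetCard, Finset.card_powersetCard,
        Finset.card_univ, Finset.card_univ, Fintype.card_fin, Fintype.card_prod,
        Fintype.card_fin]
      calc M.choose n * (M * M).choose n ≤ M ^ n * (M * M) ^ n :=
            Nat.mul_le_mul (Nat.choose_le_pow _ _) (Nat.choose_le_pow _ _)
        _ = M ^ (3 * n) := by rw [mul_pow, ← pow_add, ← pow_add]; ring_nf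
    have h5 : M ^ (3 * n) ≤ 2 ^ (n ^ 2 / 16) := by
      have e1 : n / 50 * (3 * n) ≤ 3 * n ^ 2 / 50 := by
        rw [Nat.le_div_iff_mul_le (by norm_num)]
        calc n / 50 * (3 * n) * 50 = n / 50 * 50 * (3 * n) := by ring
          _ ≤ n * (3 * n) := Nat.mul_le_mul_right _ (Nat.div_mul_le_self n 50)
          _ = 3 * n ^ 2 := by ring
      have e2 : n / 50 * (3 * n) ≤ n ^ 2 / 16 := by
        have e3 : 3 * n ^ 2 / 50 ≤ n ^ 2 / 16 := by
          generalize n ^ 2 = m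
          omega
        omega
      calc M ^ (3 * n) ≤ (2 ^ (n / 50)) ^ (3 * n) := Nat.pow_le_pow_left hup _
        _ = 2 ^ (n / 50 * (3 * n)) := by rw [← pow_mul]
        _ ≤ 2 ^ (n ^ 2 / 16) := Nat.pow_le_pow_right (by norm_num) e2
    have h6 : M ^ (3 * n) * 3 ^ (n ^ 2) < 2 ^ (2 * n ^ 2) := by
      calc M ^ (3 * n) * 3 ^ (n ^ 2) ≤ 2 ^ (n ^ 2 / 16) * 3 ^ (n ^ 2) :=
            Nat.mul_le_mul_right _ h5
        _ < 2 ^ (2 * n ^ 2) := num_ineq (n ^ 2) (by nlinarith)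
    calc Bad.card ≤ Cfg.card * (3 ^ (n ^ 2) * 2 ^ (E - 2 * n ^ 2)) := h3
      _ ≤ M ^ (3 * n) * (3 ^ (n ^ 2) * 2 ^ (E - 2 * n ^ 2)) :=
          Nat.mul_le_mul_right _ h4
      _ = (M ^ (3 * n) * 3 ^ (n ^ 2)) * 2 ^ (E - 2 * n ^ 2) := by ring
      _ < 2 ^ (2 * n ^ 2) * 2 ^ (E - 2 * n ^ 2) :=
          Nat.mul_lt_mul_of_lt_of_le h6 (le_refl _) (Nat.pow_pos (by norm_num))
      _ = 2 ^ E := by rw [← pow_add]; congr 1; omega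
  -- pick a good coloring
  have hex : ∃ g : Sym2 (Fin M) → Bool, g ∉ Bad := by
    by_contra hcon
    push_neg at hcon
    have heq : Bad = Finset.univ := Finset.eq_univ_iff_forall.2 hcon
    have : (Finset.univ : Finset (Sym2 (Fin M) → Bool)).card = 2 ^ E := by
      rw [Finset.card_univ, Fintype.card_fun, Fintype.card_bool, hEdef]
    rw [heq, this] at hBadcard
    exact lt_irrefl _ hBadcard
  obtain ⟨g, hg⟩ := hex
  refine ⟨fun a b => if h : a < M ∧ b < M then g s(⟨a, h.1⟩, ⟨b, h.2⟩) else true, ?_, ?_⟩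
  · intro a b
    dsimp only
    by_cases h : a < M ∧ b < M
    · rw [dif_pos h, dif_pos (⟨h.2, h.1⟩ : b < M ∧ a < M), Sym2.eq_swap]
    · rw [dif_neg h, dif_neg (fun h' => h ⟨h'.2, h'.1⟩)]
  · rintro ⟨A, B, C, f, hA, hB, hC, hcA, hcB, hcC, hABd, hACd, hBCd, hbij, hcol⟩
    apply hg
    rw [hBad, Finset.mem_filter]
    refine ⟨Finset.mem_univ _, ?_⟩
    have hAlt : ∀ a ∈ A, a < M := fun a ha => Finset.mem_range.1 (hA ha)
    have hBlt : ∀ b ∈ B, b < M := fun b hb => Finset.mem_range.1 (hB hb)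
    have hClt : ∀ c ∈ C, c < M := fun c hc => Finset.mem_range.1 (hC hc)
    have hfmem : ∀ b ∈ B, f b ∈ C := fun b hb => hbij.1 hb
    have hflt : ∀ b ∈ B, f b < M := fun b hb => hClt _ (hfmem b hb)
    set A' : Finset (Fin M) := A.attachFin hAlt with hA'
    set B' : Finset (Fin M) := B.attachFin hBlt with hB'
    set F : Fin M → Fin M × Fin M :=
      (fun b => (b, if h : f b.val < M then (⟨f b.val, h⟩ : Fin M) else b)) with hF
    set P : Finset (Fin M × Fin M) := B'.image F with hP
    have hmemB' : ∀ b : Fin M, b ∈ B' ↔ b.val ∈ B := fun b => Finset.mem_attachFin _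
    have hFsnd : ∀ b : Fin M, b.val ∈ B → (((F b).2 : Fin M) : ℕ) = f b.val := by
      intro b hb
      have h := hflt _ hb
      simp [hF, h]
    have hFinj : Set.InjOn F ↑B' := fun b _ b' _ h => congrArg Prod.fst h
    have hPmem : ∀ p ∈ P, ∃ b : Fin M, b.val ∈ B ∧ p = F b := by
      intro p hp
      rw [hP, Finset.mem_image] at hp
      obtain ⟨b, hb, rfl⟩ := hp
      exact ⟨b, (hmemB' b).1 hb, rfl⟩
    have hmemA' : ∀ a : Fin M, a ∈ A' ↔ a.val ∈ A := fun a => Finset.mem_attachFin _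
    refine ⟨A', P, ⟨?_, ?_, ?_, ?_, ?_, ?_, ?_⟩, ?_⟩
    · rw [hA', Finset.card_attachFin, hcA]
    · rw [hP, Finset.card_image_of_injOn hFinj, hB', Finset.card_attachFin, hcB]
    · intro p hp p' hp' h
      obtain ⟨b, hb, rfl⟩ := hPmem p hp
      obtain ⟨b', hb', rfl⟩ := hPmem p' hp'
      have : b = b' := h
      rw [this]
    · intro p hp p' hp' h
      obtain ⟨b, hb, rfl⟩ := hPmem p hp
      obtain ⟨b', hb', rfl⟩ := hPmem p' hp'
      have h2 : f b.val = f b'.val := by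
        rw [← hFsnd b hb, ← hFsnd b' hb']
        exact congrArg Fin.val h
      have h3 : b.val = b'.val := hbij.2.1 hb hb' h2
      have : b = b' := Fin.val_injective h3
      rw [this]
    · rw [Finset.disjoint_left]
      intro x hx hx'
      rw [Finset.mem_image] at hx'
      obtain ⟨p, hp, rfl⟩ := hx'
      obtain ⟨b, hb, rfl⟩ := hPmem p hp
      exact Finset.disjoint_left.1 hABd ((hmemA' _).1 hx) hb
    · rw [Finset.disjoint_left]
      intro x hx hx'
      rw [Finset.mem_image] at hx'
      obtain ⟨p, hp, rfl⟩ := hx'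
      obtain ⟨b, hb, rfl⟩ := hPmem p hp
      have : (((F b).2 : Fin M) : ℕ) ∈ C := by rw [hFsnd b hb]; exact hfmem _ hb
      exact Finset.disjoint_left.1 hACd ((hmemA' _).1 hx) this
    · rw [Finset.disjoint_left]
      intro x hx hx'
      rw [Finset.mem_image] at hx hx'
      obtain ⟨p, hp, hpe⟩ := hx
      obtain ⟨b, hb, rfl⟩ := hPmem p hp
      obtain ⟨p', hp', hpe'⟩ := hx'
      obtain ⟨b', hb', rfl⟩ := hPmem p' hp'
      have h1 : (x : ℕ) ∈ B := by
        have hfb : (F b).1 = b := rfl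
        rw [← hpe, hfb]; exact hb
      have h2 : (x : ℕ) ∈ C := by
        rw [← hpe', hFsnd b' hb']; exact hfmem _ hb'
      exact Finset.disjoint_left.1 hBCd h1 h2
    · show ∀ a ∈ A', ∀ p ∈ P, g s(a, p.1) = true ∨ g s(a, p.2) = false
      intro a ha p hp
      obtain ⟨b, hb, rfl⟩ := hPmem p hp
      have hmemA : a.val ∈ A := (hmemA' a).1 ha
      have h := hcol a.val hmemA b.val hb
      have ha1 : (a : ℕ) < M := a.isLt
      have hb1 : (b : ℕ) < M := b.isLt
      have hf1 : f b.val < M := hflt _ hb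
      simp only at h
      rw [dif_pos (⟨ha1, hb1⟩ : (a : ℕ) < M ∧ (b : ℕ) < M),
          dif_pos (⟨ha1, hf1⟩ : (a : ℕ) < M ∧ f b.val < M)] at h
      simpa [hF, hf1] using h
end

section
/- Let N, n be positive integers and suppose (N choose n)³ · n! · (3/4)^{n²} < 1. Then there exists a 2-coloring φ of the pairs of {0,…,N−1} with no three pairwise disjoint n-sets A, B, C and bijection f : B → C such that for all a ∈ A, b ∈ B, φ(a,b) = red or φ(a, f(b)) = blue. -/
private def phiw (N : ℕ) (ω : Fin N × Fin N → Bool) (a b : ℕ) : Bool :=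
  if h : a < N ∧ b < N then
    ω (⟨min a b, lt_of_le_of_lt (min_le_left a b) h.1⟩, ⟨max a b, max_lt h.1 h.2⟩)
  else true

private lemma phiw_symm (N : ℕ) (ω : Fin N × Fin N → Bool) (a b : ℕ) :
    phiw N ω a b = phiw N ω b a := by
  unfold phiw
  by_cases h : a < N ∧ b < N
  · rw [dif_pos h, dif_pos ⟨h.2, h.1⟩]
    congr 1
    simp [Prod.ext_iff, Fin.ext_iff, min_comm, max_comm]
  · rw [dif_neg h, dif_neg (by tauto)]

private def natEdge (N x y : ℕ) (hx : x < N) (hy : y < N) : Fin N × Fin N :=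
  (⟨min x y, lt_of_le_of_lt (min_le_left x y) hx⟩, ⟨max x y, max_lt hx hy⟩)

private lemma phiw_natEdge (N : ℕ) (ω : Fin N × Fin N → Bool) (x y : ℕ)
    (hx : x < N) (hy : y < N) : phiw N ω x y = ω (natEdge N x y hx hy) :=
  dif_pos ⟨hx, hy⟩

private lemma natEdge_inj {N x y x' y' : ℕ} {hx hy hx' hy'}
    (h : natEdge N x y hx hy = natEdge N x' y' hx' hy')
    (hne : x ≠ y') (hne2 : x ≠ y) : x = x' ∧ y = y' := by
  simp only [natEdge, Prod.mk.injEq, Fin.mk.injEq] at h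
  omega

private lemma count_lemma_s8 {I J : Type} [Fintype I] [Fintype J] [DecidableEq I] [DecidableEq J]
    (e : J × Bool → I) (he : Function.Injective e) (S : Finset (I → Bool))
    (hP : ∀ ω ∈ S, ∀ j, ω (e (j, false)) = true ∨ ω (e (j, true)) = false) :
    S.card ≤ 3 ^ Fintype.card J * 2 ^ (Fintype.card I - 2 * Fintype.card J) := by
  classical
  set π : (I → Bool) → (J → Bool × Bool) :=
    fun ω j => (ω (e (j, false)), ω (e (j, true))) with hπ
  set R : Finset I := Finset.image e Finset.univ with hR
  have hRcard : R.card = 2 * Fintype.card J := by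
    rw [hR, Finset.card_image_of_injective _ he, Finset.card_univ, Fintype.card_prod,
      Fintype.card_bool]
    ring
  have hfiber : ∀ g, (S.filter (fun ω => π ω = g)).card
      ≤ 2 ^ (Fintype.card I - 2 * Fintype.card J) := by
    intro g
    have hle : (S.filter (fun ω => π ω = g)).card
        ≤ (Finset.univ : Finset ({ i // i ∈ Rᶜ } → Bool)).card := by
      apply Finset.card_le_card_of_injOn (fun ω i => ω i.1) (fun _ _ => Finset.mem_univ _)
      intro ω hω ω' hω' hee
      simp only [Finset.coe_filter, Set.mem_setOf_eq] at hω hω'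
      funext i
      by_cases hi : i ∈ R
      · rw [hR, Finset.mem_image] at hi
        obtain ⟨⟨j, c⟩, -, rfl⟩ := hi
        have h1 : π ω j = π ω' j := by rw [hω.2, hω'.2]
        cases c
        · exact congrArg Prod.fst h1
        · exact congrArg Prod.snd h1
      · exact congrFun hee ⟨i, Finset.mem_compl.mpr hi⟩
    refine hle.trans_eq ?_
    rw [Finset.card_univ, Fintype.card_fun, Fintype.card_bool, Fintype.card_coe,
      Finset.card_compl, hRcard]
  set allowed : Finset (Bool × Bool) := {(true, true), (true, false), (false, false)} with hallow
  have himg : S.image π ⊆ Fintype.piFinset (fun _ : J => allowed) := by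
    intro g hg
    rw [Finset.mem_image] at hg
    obtain ⟨ω, hω, rfl⟩ := hg
    rw [Fintype.mem_piFinset]
    intro j
    have hj := hP ω hω j
    rcases hj with h1 | h1 <;>
      · simp only [hπ, hallow, Finset.mem_insert, Finset.mem_singleton, Prod.mk.injEq, h1]
        cases h2 : ω (e (j, true)) <;> cases h3 : ω (e (j, false)) <;> simp_all
  have himgcard : (S.image π).card ≤ 3 ^ Fintype.card J := by
    calc (S.image π).card ≤ (Fintype.piFinset (fun _ : J => allowed)).card :=
        Finset.card_le_card himg
      _ = 3 ^ Fintype.card J := by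
        rw [Fintype.card_piFinset]
        rw [Finset.prod_const, Finset.card_univ]
        norm_num [hallow]
  calc S.card = ∑ g ∈ S.image π, (S.filter (fun ω => π ω = g)).card :=
      Finset.card_eq_sum_card_image π S
    _ ≤ ∑ _g ∈ S.image π, 2 ^ (Fintype.card I - 2 * Fintype.card J) :=
      Finset.sum_le_sum (fun g _ => hfiber g)
    _ = (S.image π).card * 2 ^ (Fintype.card I - 2 * Fintype.card J) := by
      rw [Finset.sum_const, smul_eq_mul]
    _ ≤ 3 ^ Fintype.card J * 2 ^ (Fintype.card I - 2 * Fintype.card J) :=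
      Nat.mul_le_mul_right _ himgcard

private lemma per_equiv_bound (N n : ℕ) {A B C : Finset ℕ}
    (hA : A ⊆ Finset.range N) (hB : B ⊆ Finset.range N) (hC : C ⊆ Finset.range N)
    (hcA : A.card = n) (hcB : B.card = n) (hcC : C.card = n)
    (hAB : Disjoint A B) (hAC : Disjoint A C) (hBC : Disjoint B C)
    (e : ↥B ≃ ↥C) (S : Finset (Fin N × Fin N → Bool))
    (hS : ∀ ω ∈ S, ∀ a : ↥A, ∀ b : ↥B,
      phiw N ω ↑a ↑b = true ∨ phiw N ω ↑a ↑(e b) = false) :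
    S.card ≤ 3 ^ (n ^ 2) * 2 ^ (N ^ 2 - 2 * n ^ 2) := by
  classical
  have hAlt : ∀ a : ↥A, (a : ℕ) < N := fun a => Finset.mem_range.mp (hA a.2)
  have hBlt : ∀ b : ↥B, (b : ℕ) < N := fun b => Finset.mem_range.mp (hB b.2)
  have hClt : ∀ c : ↥C, (c : ℕ) < N := fun c => Finset.mem_range.mp (hC c.2)
  set E : (↥A × ↥B) × Bool → Fin N × Fin N := fun p =>
    if p.2 then natEdge N ↑p.1.1 ↑(e p.1.2) (hAlt p.1.1) (hClt (e p.1.2))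
    else natEdge N ↑p.1.1 ↑p.1.2 (hAlt p.1.1) (hBlt p.1.2) with hE
  have hEf : ∀ (a : ↥A) (b : ↥B),
      E ((a, b), false) = natEdge N ↑a ↑b (hAlt a) (hBlt b) := fun _ _ => rfl
  have hEt : ∀ (a : ↥A) (b : ↥B),
      E ((a, b), true) = natEdge N ↑a ↑(e b) (hAlt a) (hClt (e b)) := fun _ _ => rfl
  have hnAB : ∀ (a : ↥A) (b : ↥B), (a : ℕ) ≠ (b : ℕ) := by
    intro a b hEq
    exact Finset.disjoint_left.mp hAB a.2 (hEq ▸ b.2)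
  have hnAC : ∀ (a : ↥A) (c : ↥C), (a : ℕ) ≠ (c : ℕ) := by
    intro a c hEq
    exact Finset.disjoint_left.mp hAC a.2 (hEq ▸ c.2)
  have hnBC : ∀ (b : ↥B) (c : ↥C), (b : ℕ) ≠ (c : ℕ) := by
    intro b c hEq
    exact Finset.disjoint_left.mp hBC b.2 (hEq ▸ c.2)
  have hEinj : Function.Injective E := by
    rintro ⟨⟨a, b⟩, c⟩ ⟨⟨a', b'⟩, c'⟩ hEq
    cases c <;> cases c'
    · rw [hEf, hEf] at hEq
      obtain ⟨h1, h2⟩ := natEdge_inj hEq (hnAB a b') (hnAB a b)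
      simp [Prod.ext_iff, Subtype.ext h1, Subtype.ext h2]
    · rw [hEf, hEt] at hEq
      obtain ⟨h1, h2⟩ := natEdge_inj hEq (hnAC a (e b')) (hnAB a b)
      exact absurd h2 (hnBC b (e b'))
    · rw [hEt, hEf] at hEq
      obtain ⟨h1, h2⟩ := natEdge_inj hEq (hnAB a b') (hnAC a (e b))
      exact absurd h2.symm (hnBC b' (e b))
    · rw [hEt, hEt] at hEq
      obtain ⟨h1, h2⟩ := natEdge_inj hEq (hnAC a (e b')) (hnAC a (e b))
      have : e b = e b' := Subtype.ext h2
      simp [Prod.ext_iff, Subtype.ext h1, e.injective this]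
  have key := count_lemma_s8 E hEinj S ?_
  · refine key.trans_eq ?_
    congr 2
    · rw [Fintype.card_prod, Fintype.card_coe, Fintype.card_coe, hcA, hcB]
      ring
    · rw [Fintype.card_prod, Fintype.card_fin, Fintype.card_prod,
        Fintype.card_coe, Fintype.card_coe, hcA, hcB]
      ring_nf
  · rintro ω hω ⟨a, b⟩
    have hcond := hS ω hω a b
    rw [phiw_natEdge N ω ↑a ↑b (hAlt a) (hBlt b),
      phiw_natEdge N ω ↑a ↑(e b) (hAlt a) (hClt (e b))] at hcond
    rw [hEf, hEt]
    exact hcond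

/-- If `(N choose n)³ · n! · (3/4)^(n²) < 1`, there is a red/blue coloring (`true` = red) of the
pairs of `{0, …, N-1}` with no three pairwise disjoint `n`-sets `A, B, C` and bijection
`f : B → C` such that for all `a ∈ A`, `b ∈ B`, `φ a b` is red or `φ a (f b)` is blue. -/
theorem stmt8 (N n : ℕ) (hN : 0 < N) (hn : 0 < n)
    (h : ((N.choose n : ℝ)) ^ 3 * (n.factorial : ℝ) * (3 / 4 : ℝ) ^ (n ^ 2) < 1) :
    ∃ φ : ℕ → ℕ → Bool, (∀ a b, φ a b = φ b a) ∧
      ¬ ∃ (A B C : Finset ℕ) (f : ℕ → ℕ),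
        A ⊆ Finset.range N ∧ B ⊆ Finset.range N ∧ C ⊆ Finset.range N ∧
        A.card = n ∧ B.card = n ∧ C.card = n ∧
        Disjoint A B ∧ Disjoint A C ∧ Disjoint B C ∧
        Set.BijOn f ↑B ↑C ∧
        ∀ a ∈ A, ∀ b ∈ B, φ a b = true ∨ φ a (f b) = false := by
  classical
  rcases lt_or_ge N (3 * n) with hsmall | hbig
  · refine ⟨fun _ _ => true, fun _ _ => rfl, ?_⟩
    rintro ⟨A, B, C, f, hA, hB, hC, hcA, hcB, hcC, hAB, hAC, hBC, -, -⟩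
    have h1 : (A ∪ B ∪ C).card = 3 * n := by
      rw [Finset.card_union_of_disjoint (by simp [Finset.disjoint_union_left, hAC, hBC]),
        Finset.card_union_of_disjoint hAB, hcA, hcB, hcC]
      ring
    have h2 : (A ∪ B ∪ C).card ≤ N := by
      have := Finset.card_le_card (Finset.union_subset (Finset.union_subset hA hB) hC)
      simpa using this
    omega
  · by_contra hcon
    push_neg at hcon
    set T : Finset (Finset ℕ × Finset ℕ × Finset ℕ) :=
      ((Finset.range N).powersetCard n ×ˢ (Finset.range N).powersetCard n ×ˢ
        (Finset.range N).powersetCard n).filter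
        (fun t => Disjoint t.1 t.2.1 ∧ Disjoint t.1 t.2.2 ∧ Disjoint t.2.1 t.2.2) with hT
    set BadSet : Finset ℕ × Finset ℕ × Finset ℕ → Finset (Fin N × Fin N → Bool) := fun t =>
      Finset.univ.filter (fun ω => ∃ f : ℕ → ℕ, Set.BijOn f ↑t.2.1 ↑t.2.2 ∧
        ∀ a ∈ t.1, ∀ b ∈ t.2.1, phiw N ω a b = true ∨ phiw N ω a (f b) = false) with hBS
    have hcover : (Finset.univ : Finset (Fin N × Fin N → Bool)) ⊆ T.biUnion BadSet := by
      intro ω _hum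
      obtain ⟨A, B, C, f, hA, hB, hC, hcA, hcB, hcC, hAB, hAC, hBC, hbij, hcol⟩ :=
        hcon (phiw N ω) (phiw_symm N ω)
      refine Finset.mem_biUnion.mpr ⟨(A, B, C), ?_, ?_⟩
      · simp only [hT, Finset.mem_filter, Finset.mem_product, Finset.mem_powersetCard]
        exact ⟨⟨⟨hA, hcA⟩, ⟨hB, hcB⟩, hC, hcC⟩, hAB, hAC, hBC⟩
      · simp only [hBS, Finset.mem_filter, Finset.mem_univ, true_and]
        exact ⟨f, hbij, hcol⟩
    have hbound : ∀ t ∈ T, (BadSet t).card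
        ≤ n.factorial * (3 ^ (n ^ 2) * 2 ^ (N ^ 2 - 2 * n ^ 2)) := by
      rintro ⟨A, B, C⟩ ht
      simp only [hT, Finset.mem_filter, Finset.mem_product, Finset.mem_powersetCard] at ht
      obtain ⟨⟨⟨hA, hcA⟩, ⟨hB, hcB⟩, hC, hcC⟩, hAB, hAC, hBC⟩ := ht
      set Bad' : (↥B ≃ ↥C) → Finset (Fin N × Fin N → Bool) := fun e =>
        Finset.univ.filter (fun ω => ∀ a : ↥A, ∀ b : ↥B,
          phiw N ω ↑a ↑b = true ∨ phiw N ω ↑a ↑(e b) = false) with hBad'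
      have hsub : BadSet (A, B, C) ⊆ (Finset.univ : Finset (↥B ≃ ↥C)).biUnion Bad' := by
        intro ω hω
        simp only [hBS, Finset.mem_filter, Finset.mem_univ, true_and] at hω
        obtain ⟨f, hbij, hcol⟩ := hω
        have hg : ∀ b : ↥B, f ↑b ∈ C := fun b => hbij.mapsTo b.2
        have hginj : Function.Injective (fun b : ↥B => (⟨f ↑b, hg b⟩ : ↥C)) := by
          intro b b' hbb
          exact Subtype.ext (hbij.injOn b.2 b'.2 (congrArg Subtype.val hbb))
        have hgbij : Function.Bijective (fun b : ↥B => (⟨f ↑b, hg b⟩ : ↥C)) := by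
          rw [Fintype.bijective_iff_injective_and_card]
          exact ⟨hginj, by rw [Fintype.card_coe, Fintype.card_coe, hcB, hcC]⟩
        refine Finset.mem_biUnion.mpr ⟨Equiv.ofBijective _ hgbij, Finset.mem_univ _, ?_⟩
        simp only [hBad', Finset.mem_filter, Finset.mem_univ, true_and]
        intro a b
        have := hcol ↑a a.2 ↑b b.2
        simpa [Equiv.ofBijective_apply] using this
      have hBad'card : ∀ e : ↥B ≃ ↥C,
          (Bad' e).card ≤ 3 ^ (n ^ 2) * 2 ^ (N ^ 2 - 2 * n ^ 2) := by
        intro e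
        refine per_equiv_bound N n hA hB hC hcA hcB hcC hAB hAC hBC e (Bad' e) ?_
        intro ω hω
        simp only [hBad', Finset.mem_filter, Finset.mem_univ, true_and] at hω
        exact hω
      calc (BadSet (A, B, C)).card
          ≤ ((Finset.univ : Finset (↥B ≃ ↥C)).biUnion Bad').card := Finset.card_le_card hsub
        _ ≤ ∑ e : ↥B ≃ ↥C, (Bad' e).card := Finset.card_biUnion_le
        _ ≤ ∑ _e : ↥B ≃ ↥C, (3 ^ (n ^ 2) * 2 ^ (N ^ 2 - 2 * n ^ 2)) :=
            Finset.sum_le_sum (fun e _ => hBad'card e)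
        _ = Fintype.card (↥B ≃ ↥C) * (3 ^ (n ^ 2) * 2 ^ (N ^ 2 - 2 * n ^ 2)) := by
            rw [Finset.sum_const, smul_eq_mul, Finset.card_univ]
        _ = n.factorial * (3 ^ (n ^ 2) * 2 ^ (N ^ 2 - 2 * n ^ 2)) := by
            have hex : Nonempty (↥B ≃ ↥C) :=
              ⟨Fintype.equivOfCardEq (by rw [Fintype.card_coe, Fintype.card_coe, hcB, hcC])⟩
            rw [Fintype.card_equiv hex.some, Fintype.card_coe, hcB]
    have hTcard : T.card ≤ (N.choose n) ^ 3 := by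
      calc T.card ≤ ((Finset.range N).powersetCard n ×ˢ (Finset.range N).powersetCard n ×ˢ
            (Finset.range N).powersetCard n).card := Finset.card_filter_le _ _
        _ = (N.choose n) ^ 3 := by
            rw [Finset.card_product, Finset.card_product, Finset.card_powersetCard,
              Finset.card_range]
            ring
    have hchain : (2 : ℕ) ^ (N ^ 2)
        ≤ (N.choose n) ^ 3 * (n.factorial * (3 ^ (n ^ 2) * 2 ^ (N ^ 2 - 2 * n ^ 2))) := by
      calc (2 : ℕ) ^ (N ^ 2) = (Finset.univ : Finset (Fin N × Fin N → Bool)).card := by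
            rw [Finset.card_univ, Fintype.card_fun, Fintype.card_bool, Fintype.card_prod,
              Fintype.card_fin]
            ring_nf
        _ ≤ (T.biUnion BadSet).card := Finset.card_le_card hcover
        _ ≤ ∑ t ∈ T, (BadSet t).card := Finset.card_biUnion_le
        _ ≤ ∑ _t ∈ T, (n.factorial * (3 ^ (n ^ 2) * 2 ^ (N ^ 2 - 2 * n ^ 2))) :=
            Finset.sum_le_sum hbound
        _ = T.card * (n.factorial * (3 ^ (n ^ 2) * 2 ^ (N ^ 2 - 2 * n ^ 2))) := by
            rw [Finset.sum_const, smul_eq_mul]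
        _ ≤ (N.choose n) ^ 3 * (n.factorial * (3 ^ (n ^ 2) * 2 ^ (N ^ 2 - 2 * n ^ 2))) :=
            Nat.mul_le_mul_right _ hTcard
    have h2n : 2 * n ^ 2 ≤ N ^ 2 := by nlinarith
    have hR : ((2 : ℝ)) ^ (N ^ 2) ≤ (N.choose n : ℝ) ^ 3 *
        ((n.factorial : ℝ) * ((3 : ℝ) ^ (n ^ 2) * (2 : ℝ) ^ (N ^ 2 - 2 * n ^ 2))) := by
      exact_mod_cast hchain
    have hx : (3 : ℝ) ^ (n ^ 2) * (2 : ℝ) ^ (N ^ 2 - 2 * n ^ 2)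
        = (3 / 4 : ℝ) ^ (n ^ 2) * 2 ^ (N ^ 2) := by
      rw [div_pow]
      rw [show ((4 : ℝ)) ^ (n ^ 2) = 2 ^ (2 * n ^ 2) by rw [pow_mul]; norm_num]
      rw [show (2 : ℝ) ^ (N ^ 2) = 2 ^ (2 * n ^ 2) * 2 ^ (N ^ 2 - 2 * n ^ 2) by
        rw [← pow_add]; congr 1; omega]
      have : (2 : ℝ) ^ (2 * n ^ 2) ≠ 0 := by positivity
      field_simp
    rw [hx] at hR
    have hpos : (0 : ℝ) < 2 ^ (N ^ 2) := by positivity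
    have hlt := mul_lt_mul_of_pos_right h hpos
    rw [one_mul] at hlt
    nlinarith [hR, hlt]
end

section
/- For every n ≥ 4 there exists a partial Steiner (n,4,2)-system with at least c'·n² blocks, for some absolute constant c' > 0; e.g., c' = 1/100 works for all n ≥ 4. -/
def ffn (m : ℕ) : Fin 4 → ZMod m × ZMod m → ZMod m
  | 0, p => p.1
  | 1, p => p.2
  | 2, p => p.1 + p.2
  | 3, p => p.1 + 2 * p.2

def elx (n m : ℕ) (h : 4 * m ≤ n) [NeZero m] (i : Fin 4) (v : ZMod m) : Fin n :=
  ⟨i.1 * m + v.val, by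
    have hv := ZMod.val_lt v
    have hi := i.2
    have : i.1 * m ≤ 3 * m := Nat.mul_le_mul_right m (by omega)
    omega⟩

lemma elx_inj (n m : ℕ) (h : 4 * m ≤ n) [NeZero m] {i j : Fin 4} {v w : ZMod m}
    (he : elx n m h i v = elx n m h j w) : i = j ∧ v = w := by
  have hm : 0 < m := NeZero.pos m
  have h1 : i.1 * m + v.val = j.1 * m + w.val := congrArg Fin.val he
  have hv := ZMod.val_lt v
  have hw := ZMod.val_lt w
  have hdi : (i.1 * m + v.val) / m = i.1 := by
    rw [mul_comm, Nat.mul_add_div hm, Nat.div_eq_of_lt hv, Nat.add_zero]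
  have hdj : (j.1 * m + w.val) / m = j.1 := by
    rw [mul_comm, Nat.mul_add_div hm, Nat.div_eq_of_lt hw, Nat.add_zero]
  have hij : i.1 = j.1 := by rw [← hdi, ← hdj, h1]
  have hvw : v.val = w.val := by
    have : i.1 * m = j.1 * m := by rw [hij]
    omega
  exact ⟨Fin.ext hij, ZMod.val_injective m hvw⟩

lemma ffn_inj (m : ℕ) (h2 : IsUnit (2 : ZMod m)) {i j : Fin 4} (hij : i ≠ j)
    {p q : ZMod m × ZMod m} (hi : ffn m i p = ffn m i q) (hj : ffn m j p = ffn m j q) :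
    p = q := by
  obtain ⟨a, b⟩ := p
  obtain ⟨c, d⟩ := q
  have key : ∀ x y : ZMod m, 2 * x = 2 * y → x = y := fun x y h => h2.mul_left_cancel h
  simp only [Prod.mk.injEq]
  fin_cases i <;> fin_cases j <;> simp only [ffn] at hi hj <;>
    first
    | exact absurd rfl hij
    | (constructor <;>
        first
        | assumption
        | linear_combination hi - hj
        | linear_combination hj - hi
        | linear_combination 2 * hi - hj
        | linear_combination 2 * hj - hi
        | linear_combination hi - 2 * hj
        | linear_combination hj - 2 * hi
        | exact key _ _ (by linear_combination hj - hi)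
        | exact key _ _ (by linear_combination hi - hj))

def blk (n m : ℕ) (h : 4 * m ≤ n) [NeZero m] (p : ZMod m × ZMod m) : Finset (Fin n) :=
  Finset.univ.image (fun i => elx n m h i (ffn m i p))

lemma mem_blk (n m : ℕ) (h : 4 * m ≤ n) [NeZero m] {p : ZMod m × ZMod m} {z : Fin n} :
    z ∈ blk n m h p ↔ ∃ i, elx n m h i (ffn m i p) = z := by
  simp [blk]

lemma card_blk (n m : ℕ) (h : 4 * m ≤ n) [NeZero m] (p : ZMod m × ZMod m) :
    (blk n m h p).card = 4 := by
  rw [blk, Finset.card_image_of_injective _ (fun i j hij => (elx_inj n m h hij).1)]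
  simp

lemma steiner_main (n m : ℕ) (hodd : m % 2 = 1) (h4 : 4 * m ≤ n) :
    ∃ S : Finset (Finset (Fin n)),
      (∀ s ∈ S, s.card = 4) ∧
      (∀ s ∈ S, ∀ t ∈ S, s ≠ t → (s ∩ t).card ≤ 1) ∧ S.card = m * m := by
  haveI : NeZero m := ⟨by omega⟩
  have h2 : IsUnit (2 : ZMod m) := by
    have hc : ((2 : ℕ) : ZMod m) = 2 := by push_cast; ring
    rw [← hc, ZMod.isUnit_iff_coprime]
    exact (Nat.Prime.coprime_iff_not_dvd Nat.prime_two).mpr (by omega)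
  -- blk is injective
  have hblk_inj : Function.Injective (blk n m h4) := by
    intro p q hpq
    have m0 : elx n m h4 0 (ffn m 0 p) ∈ blk n m h4 q := by
      rw [← hpq, mem_blk]; exact ⟨0, rfl⟩
    have m1 : elx n m h4 1 (ffn m 1 p) ∈ blk n m h4 q := by
      rw [← hpq, mem_blk]; exact ⟨1, rfl⟩
    rw [mem_blk] at m0 m1
    obtain ⟨j0, hj0⟩ := m0
    obtain ⟨j1, hj1⟩ := m1
    obtain ⟨hj0i, hj0v⟩ := elx_inj n m h4 hj0
    obtain ⟨hj1i, hj1v⟩ := elx_inj n m h4 hj1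
    subst hj0i; subst hj1i
    exact Prod.ext hj0v.symm hj1v.symm
  refine ⟨Finset.univ.image (blk n m h4), ?_, ?_, ?_⟩
  · intro s hs
    obtain ⟨p, -, rfl⟩ := Finset.mem_image.mp hs
    exact card_blk n m h4 p
  · intro s hs t ht hst
    obtain ⟨p, -, rfl⟩ := Finset.mem_image.mp hs
    obtain ⟨q, -, rfl⟩ := Finset.mem_image.mp ht
    have hpq : p ≠ q := fun h => hst (by rw [h])
    by_contra hcard
    push_neg at hcard
    obtain ⟨a, ha, b, hb, hab⟩ := Finset.one_lt_card.mp hcard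
    obtain ⟨hap, haq⟩ := Finset.mem_inter.mp ha
    obtain ⟨hbp, hbq⟩ := Finset.mem_inter.mp hb
    obtain ⟨ia, hia⟩ := (mem_blk n m h4).mp hap
    obtain ⟨ja, hja⟩ := (mem_blk n m h4).mp haq
    obtain ⟨ib, hib⟩ := (mem_blk n m h4).mp hbp
    obtain ⟨jb, hjb⟩ := (mem_blk n m h4).mp hbq
    obtain ⟨hia_eq, hfa⟩ := elx_inj n m h4 (hia.trans hja.symm)
    obtain ⟨hib_eq, hfb⟩ := elx_inj n m h4 (hib.trans hjb.symm)
    subst hia_eq; subst hib_eq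
    have hiaib : ia ≠ ib := by
      intro h
      apply hab
      rw [← hia, ← hib, h]
    exact hpq (ffn_inj m h2 hiaib hfa hfb)
  · rw [Finset.card_image_of_injective _ hblk_inj]
    simp [ZMod.card]

/-- For every `n ≥ 4` there is a partial Steiner `(n,4,2)`-system (a family of 4-element
blocks in which any two pairs of points lie in at most one common block) with at least
`n²/100` blocks. -/
theorem stmt10 (n : ℕ) (hn : 4 ≤ n) :
    ∃ S : Finset (Finset (Fin n)),
      (∀ s ∈ S, s.card = 4) ∧
      (∀ s ∈ S, ∀ t ∈ S, s ≠ t → (s ∩ t).card ≤ 1) ∧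
      (n : ℝ) ^ 2 / 100 ≤ (S.card : ℝ) := by
  by_cases h11 : n = 11
  · subst h11
    have hAB : ({0,1,2,3} : Finset (Fin 11)) ≠ {4,5,6,7} := by decide
    refine ⟨{({0,1,2,3} : Finset (Fin 11)), {4,5,6,7}}, ?_, ?_, ?_⟩
    · intro s hs
      simp only [Finset.mem_insert, Finset.mem_singleton] at hs
      rcases hs with rfl | rfl <;> decide
    · intro s hs t ht hst
      simp only [Finset.mem_insert, Finset.mem_singleton] at hs ht
      rcases hs with rfl | rfl <;> rcases ht with rfl | rfl <;>
        first | (exact absurd rfl hst) | decide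
    · rw [Finset.card_insert_of_notMem (by simpa using hAB), Finset.card_singleton]
      norm_num
  · obtain ⟨m, hodd, h4m, h10⟩ : ∃ m, m % 2 = 1 ∧ 4 * m ≤ n ∧ n ≤ 10 * m := by
      rcases Nat.even_or_odd (n / 4) with h | h
      · rw [Nat.even_iff] at h
        exact ⟨n / 4 - 1, by omega, by omega, by omega⟩
      · rw [Nat.odd_iff] at h
        exact ⟨n / 4, by omega, by omega, by omega⟩
    obtain ⟨S, h1, h2, h3⟩ := steiner_main n m hodd h4m
    refine ⟨S, h1, h2, ?_⟩
    rw [h3]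
    have hn0 : (0 : ℝ) ≤ n := by positivity
    have hc : (n : ℝ) ≤ 10 * m := by exact_mod_cast h10
    have hsq : (n : ℝ) * n ≤ (10 * m) * (10 * m) :=
      mul_le_mul hc hc hn0 (le_trans hn0 hc)
    push_cast
    rw [div_le_iff₀ (by norm_num)]
    nlinarith
end

section
/- Let v₁ < ⋯ < v₆ be natural numbers with δᵢ = δ(vᵢ,v_{i+1}) satisfying δ₁ > δ₂ > δ₃ > δ₄ < δ₅ (Case 7, first subcase). Then each of the three edges e₁, e₂, e₃ (removing v₁, v₂, v₃ respectively) has δ-sequence of the form (δ_i, δ_j, δ₄, δ₅) with δ_i > δ_j > δ₄ < δ₅ for some i < j in {1,2,3}. -/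
private lemma delta_spec {u v : ℕ} (h : u ≠ v) :
    (u.testBit (delta u v) ≠ v.testBit (delta u v)) ∧
      ∀ j, delta u v < j → u.testBit j = v.testBit j := by
  have hx : u ^^^ v ≠ 0 := fun hx => h (Nat.xor_eq_zero_iff.mp hx)
  obtain ⟨i, hi, hi'⟩ := Nat.exists_most_significant_bit hx
  have hset : {j | u.testBit j ≠ v.testBit j} = {j | (u ^^^ v).testBit j = true} := by
    ext j; simp only [Set.mem_setOf_eq, Nat.testBit_xor]; cases u.testBit j <;> cases v.testBit j <;> simp
  have hdelta : delta u v = i := by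
    unfold delta
    rw [hset]
    apply le_antisymm
    · apply csSup_le ⟨i, hi⟩
      intro j hj
      by_contra hji
      exact absurd (hi' j (lt_of_not_ge hji)) (by simpa using hj)
    · exact le_csSup ⟨i, fun j hj => by
        by_contra hji
        exact absurd (hi' j (lt_of_not_ge hji)) (by simpa using hj)⟩ hi
  constructor
  · rw [hdelta]
    have := hi
    rw [Nat.testBit_xor] at this
    revert this
    cases u.testBit i <;> cases v.testBit i <;> simp
  · intro j hj
    rw [hdelta] at hj
    have := hi' j hj
    rw [Nat.testBit_xor] at this
    revert this
    cases u.testBit j <;> cases v.testBit j <;> simp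

private lemma delta_merge {u v w : ℕ} (huv : u ≠ v) (hvw : v ≠ w)
    (hlt : delta v w < delta u v) : delta u w = delta u v := by
  obtain ⟨h1, h1'⟩ := delta_spec huv
  obtain ⟨_, h2'⟩ := delta_spec hvw
  have hmem : u.testBit (delta u v) ≠ w.testBit (delta u v) := by
    rw [← h2' _ hlt]; exact h1
  unfold delta
  apply le_antisymm
  · apply csSup_le ⟨delta u v, hmem⟩
    intro j hj
    by_contra hji
    have hlt' : delta u v < j := lt_of_not_ge hji
    exact hj (by rw [h1' j hlt', h2' j (lt_trans hlt hlt')])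
  · refine le_csSup ⟨delta u v, fun j hj => ?_⟩ hmem
    by_contra hji
    have hlt' : delta u v < j := lt_of_not_ge hji
    exact hj (by rw [h1' j hlt', h2' j (lt_trans hlt hlt')])

/-- Case 7 (first subcase): if `δ₁ > δ₂ > δ₃ > δ₄ < δ₅`, then the δ-sequences of
`e₁, e₂, e₃` are `(δ₂, δ₃, δ₄, δ₅)`, `(δ₁, δ₃, δ₄, δ₅)` and `(δ₁, δ₂, δ₄, δ₅)` respectively
(removing `v₂` merges `δ₁, δ₂` into `δ(v₁,v₃) = δ₁`; removing `v₃` merges `δ₂, δ₃` into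
`δ(v₂,v₄) = δ₂`), each of the form `δᵢ > δⱼ > δ₄ < δ₅` with `i < j` in `{1,2,3}`. -/
theorem stmt12 (v1 v2 v3 v4 v5 v6 : ℕ)
    (h12 : v1 < v2) (h23 : v2 < v3) (h34 : v3 < v4) (h45 : v4 < v5) (h56 : v5 < v6)
    (hd1 : delta v2 v3 < delta v1 v2)
    (hd2 : delta v3 v4 < delta v2 v3)
    (hd3 : delta v4 v5 < delta v3 v4)
    (hd4 : delta v4 v5 < delta v5 v6) :
    (delta v3 v4 < delta v2 v3 ∧ delta v4 v5 < delta v3 v4 ∧ delta v4 v5 < delta v5 v6) ∧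
    (delta v1 v3 = delta v1 v2 ∧ delta v3 v4 < delta v1 v2 ∧ delta v4 v5 < delta v3 v4 ∧
      delta v4 v5 < delta v5 v6) ∧
    (delta v2 v4 = delta v2 v3 ∧ delta v2 v3 < delta v1 v2 ∧ delta v4 v5 < delta v2 v3 ∧
      delta v4 v5 < delta v5 v6) := by
  refine ⟨⟨hd2, hd3, hd4⟩,
    ⟨delta_merge h12.ne h23.ne hd1, lt_trans hd2 hd1, hd3, hd4⟩,
    ⟨delta_merge h23.ne h34.ne hd2, hd1, lt_trans hd3 hd2, hd4⟩⟩
end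

section
/- Let a₁, …, a_m be a sequence of natural numbers with a_j ≠ a_{j+1} for consecutive j, and suppose indices j < k are both local maxima with a_j = a_k. Then there exists ℓ with j < ℓ < k such that a_ℓ > a_j. -/
namespace DeltaAux

lemma bddAbove_S (u v : ℕ) : BddAbove {i | u.testBit i ≠ v.testBit i} := by
  refine ⟨u + v, fun i hi => ?_⟩
  by_contra h
  push_neg at h
  have hu : u.testBit i = false :=
    Nat.testBit_lt_two_pow (lt_of_lt_of_le (Nat.lt_two_pow_self (n := u))
      (Nat.pow_le_pow_right (by norm_num) (by omega)))
  have hv : v.testBit i = false :=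
    Nat.testBit_lt_two_pow (lt_of_lt_of_le (Nat.lt_two_pow_self (n := v))
      (Nat.pow_le_pow_right (by norm_num) (by omega)))
  exact hi (by rw [hu, hv])

lemma nonempty_S {u v : ℕ} (h : u ≠ v) : {i | u.testBit i ≠ v.testBit i}.Nonempty := by
  by_contra he
  rw [Set.not_nonempty_iff_eq_empty] at he
  apply h
  apply Nat.eq_of_testBit_eq
  intro i
  by_contra hi
  have : i ∈ {i | u.testBit i ≠ v.testBit i} := hi
  rw [he] at this
  exact this

lemma delta_mem {u v : ℕ} (h : u ≠ v) : u.testBit (delta u v) ≠ v.testBit (delta u v) :=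
  Nat.sSup_mem (nonempty_S h) (bddAbove_S u v)

lemma le_delta {u v i : ℕ} (h : u.testBit i ≠ v.testBit i) : i ≤ delta u v :=
  le_csSup (bddAbove_S u v) (Set.mem_setOf.mpr h)

lemma testBit_eq_of_gt {u v : ℕ} {i : ℕ} (h : delta u v < i) : u.testBit i = v.testBit i := by
  by_contra hi
  exact absurd (le_delta hi) (by omega)

lemma testBit_delta_of_lt {u v : ℕ} (h : u < v) :
    u.testBit (delta u v) = false ∧ v.testBit (delta u v) = true := by
  have hd := delta_mem (Nat.ne_of_lt h)
  cases hu : u.testBit (delta u v) with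
  | false =>
    refine ⟨rfl, ?_⟩
    cases hvb : v.testBit (delta u v) with
    | false => rw [hu, hvb] at hd; exact absurd rfl hd
    | true => rfl
  | true =>
    exfalso
    cases hvb : v.testBit (delta u v) with
    | false =>
      have : v < u := Nat.lt_of_testBit (delta u v) hvb hu
        (fun j hj => (testBit_eq_of_gt hj).symm)
      omega
    | true => rw [hu, hvb] at hd; exact absurd rfl hd

lemma delta_le_max (u v w : ℕ) : delta u w ≤ max (delta u v) (delta v w) := by
  rcases Set.eq_empty_or_nonempty {i | u.testBit i ≠ w.testBit i} with he | hne
  · simp [delta, he]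
  · apply csSup_le hne
    intro i hi
    rcases Decidable.eq_or_ne (u.testBit i) (v.testBit i) with h1 | h1
    · exact le_trans (le_delta (h1 ▸ hi)) (le_max_right _ _)
    · exact le_trans (le_delta h1) (le_max_left _ _)

lemma chain (w : ℕ → ℕ) :
    ∀ b a, a < b → ∃ l, a ≤ l ∧ l < b ∧ delta (w a) (w b) ≤ delta (w l) (w (l + 1)) := by
  intro b
  induction b with
  | zero => omega
  | succ n ih =>
    intro a ha
    rcases eq_or_lt_of_le (Nat.lt_succ_iff.mp ha) with h | h
    · subst h; exact ⟨a, le_refl _, Nat.lt_succ_self _, le_refl _⟩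
    · have hmax := delta_le_max (w a) (w n) (w (n + 1))
      rcases le_max_iff.mp hmax with h1 | h1
      · obtain ⟨l, hl1, hl2, hl3⟩ := ih a h
        exact ⟨l, hl1, by omega, le_trans h1 hl3⟩
      · exact ⟨n, by omega, by omega, h1⟩

end DeltaAux

/-- For `v₁ < ⋯ < v_m` with `δᵢ = δ(vᵢ, vᵢ₊₁)`, if `δⱼ = δₖ` for some `j < k`, then some
intermediate `δₗ` with `j < ℓ < k` satisfies `δₗ > δⱼ`. -/
theorem stmt13 (m : ℕ) (v : Fin m → ℕ) (hv : StrictMono v)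
    (j k : ℕ) (hj : j + 1 < m) (hk : k + 1 < m) (hjk : j < k)
    (heq : delta (v ⟨j, by omega⟩) (v ⟨j + 1, hj⟩) = delta (v ⟨k, by omega⟩) (v ⟨k + 1, hk⟩)) :
    ∃ (l : ℕ) (h1 : j < l) (h2 : l < k),
      delta (v ⟨j, by omega⟩) (v ⟨j + 1, hj⟩) <
        delta (v ⟨l, by omega⟩) (v ⟨l + 1, by omega⟩) := by
  have hjm : j < m := Nat.lt_of_succ_lt hj
  have hkm : k < m := Nat.lt_of_succ_lt hk
  have h1 : v ⟨j, hjm⟩ < v ⟨j + 1, hj⟩ := hv (Fin.mk_lt_mk.mpr (Nat.lt_succ_self j))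
  have h2 : v ⟨k, hkm⟩ < v ⟨k + 1, hk⟩ := hv (Fin.mk_lt_mk.mpr (Nat.lt_succ_self k))
  have hbj := DeltaAux.testBit_delta_of_lt h1
  have hbk := DeltaAux.testBit_delta_of_lt h2
  have heq' : delta (v ⟨j, hjm⟩) (v ⟨j + 1, hj⟩) = delta (v ⟨k, hkm⟩) (v ⟨k + 1, hk⟩) := heq
  have hbk1 : (v ⟨k, hkm⟩ : ℕ).testBit (delta (v ⟨j, hjm⟩) (v ⟨j + 1, hj⟩)) = false := by
    rw [heq']; exact hbk.1
  rcases eq_or_lt_of_le (Nat.succ_le_of_lt hjk) with hcase | hcase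
  · -- j + 1 = k : contradiction
    exfalso
    have hkey : (v ⟨j + 1, hj⟩ : ℕ) = v ⟨k, hkm⟩ := by
      congr 1
      exact Fin.ext hcase
    rw [← hkey, hbj.2] at hbk1
    exact absurd hbk1 (by simp)
  · -- j + 1 < k
    have hlt : v ⟨j + 1, hj⟩ < v ⟨k, hkm⟩ := hv (Fin.mk_lt_mk.mpr hcase)
    have hdiff : (v ⟨j + 1, hj⟩ : ℕ).testBit (delta (v ⟨j, hjm⟩) (v ⟨j + 1, hj⟩)) ≠
        (v ⟨k, hkm⟩ : ℕ).testBit (delta (v ⟨j, hjm⟩) (v ⟨j + 1, hj⟩)) := by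
      rw [hbj.2, hbk1]; simp
    have hde := DeltaAux.le_delta hdiff
    have hdne : delta (v ⟨j, hjm⟩) (v ⟨j + 1, hj⟩) ≠ delta (v ⟨j + 1, hj⟩) (v ⟨k, hkm⟩) := by
      intro hcontra
      have h3 := (DeltaAux.testBit_delta_of_lt hlt).1
      rw [← hcontra, hbj.2] at h3
      exact absurd h3 (by simp)
    obtain ⟨l, hl1, hl2, hl3⟩ :=
      DeltaAux.chain (fun i => if h : i < m then v ⟨i, h⟩ else 0) k (j + 1) hcase
    rw [dif_pos hj, dif_pos hkm, dif_pos (Nat.lt_trans hl2 hkm),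
      dif_pos (Nat.lt_trans (Nat.succ_lt_succ hl2) hk)] at hl3
    exact ⟨l, Nat.lt_of_succ_le hl1, hl2,
      lt_of_lt_of_le (lt_of_le_of_ne hde hdne) hl3⟩
end

section
/- Let b₁, …, b_M be pairwise distinct natural numbers with M = 16n² and n ≥ 1. Define recursively sets S_r, T_r ⊆ [M] with the invariants: |S_r| + |T_r| = r; setting σ_r = max(S_r) (or 0 if empty) and τ_r = min(T_r) (or M+1 if empty), τ_r − σ_r ≥ M − 4nr; for s ∈ S_r and s < ℓ < τ_r, b_s > b_ℓ; and for t ∈ T_r and σ_r < ℓ < t, b_t > b_ℓ. If for no k with 4n < k ≤ M−4n does b_k exceed b_ℓ for all ℓ ≠ k in [k−4n, k+4n], then such S_r, T_r exist for all r ≤ 2n. -/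
/-- Construction of the sets `S_r, T_r`: given `b : [16n²] → ℕ` injective (1-indexed) with no
`4n`-dominant peak, for every `r ≤ 2n` there exist sets `S, T` with the stated invariants. -/
theorem stmt14 (n : ℕ) (hn : 1 ≤ n) (b : ℕ → ℕ)
    (hinj : ∀ i j, 1 ≤ i → i ≤ 16 * n ^ 2 → 1 ≤ j → j ≤ 16 * n ^ 2 → i ≠ j → b i ≠ b j)
    (hpeak : ¬ ∃ k, 4 * n < k ∧ k ≤ 16 * n ^ 2 - 4 * n ∧
      ∀ l, k - 4 * n ≤ l → l ≤ k + 4 * n → l ≠ k → b l < b k)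
    (r : ℕ) (hr : r ≤ 2 * n) :
    ∃ (S T : Finset ℕ) (σ τ : ℕ),
      (∀ s ∈ S, 1 ≤ s ∧ s ≤ 16 * n ^ 2) ∧
      (∀ t ∈ T, 1 ≤ t ∧ t ≤ 16 * n ^ 2) ∧
      (S = ∅ → σ = 0) ∧ (∀ h : S.Nonempty, σ = S.max' h) ∧
      (T = ∅ → τ = 16 * n ^ 2 + 1) ∧ (∀ h : T.Nonempty, τ = T.min' h) ∧
      S.card + T.card = r ∧
      ((16 * n ^ 2 : ℤ) - 4 * n * r ≤ (τ : ℤ) - (σ : ℤ)) ∧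
      (∀ s ∈ S, ∀ l, s < l → l < τ → b l < b s) ∧
      (∀ t ∈ T, ∀ l, σ < l → l < t → b l < b t) := by
  induction r with
  | zero =>
    refine ⟨∅, ∅, 0, 16 * n ^ 2 + 1, by simp, by simp, fun _ => rfl, by simp,
      fun _ => rfl, by simp, by simp, ?_, by simp, by simp⟩
    push_cast
    linarith
  | succ r ih =>
    have hr' : r ≤ 2 * n := by omega
    obtain ⟨S, T, σ, τ, hS, hT, hSσ, hσ, hTτ, hτ, hcard, hgap, hdomS, hdomT⟩ := ih hr'
    -- bounds on σ and τ
    have hσM : σ ≤ 16 * n ^ 2 := by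
      rcases S.eq_empty_or_nonempty with h | h
      · simp [hSσ h]
      · rw [hσ h]; exact (hS _ (S.max'_mem h)).2
    have hτM : τ ≤ 16 * n ^ 2 + 1 := by
      rcases T.eq_empty_or_nonempty with h | h
      · simp [hTτ h]
      · rw [hτ h]; exact le_trans (hT _ (T.min'_mem h)).2 (by omega)
    -- the interval (σ, τ) is long
    have hnr : (4 * n * (r + 1) : ℤ) ≤ 4 * n * (2 * n) := by
      have : 4 * n * (r + 1) ≤ 4 * n * (2 * n) := Nat.mul_le_mul_left _ hr
      exact_mod_cast this
    have h2 : σ + 2 ≤ τ := by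
      have hn' : (1 : ℤ) ≤ (n : ℤ) := by exact_mod_cast hn
      have : (σ : ℤ) + 2 ≤ τ := by nlinarith [hgap, hnr, hn']
      exact_mod_cast this
    -- pick k maximizing b on (σ, τ)
    have hne : (Finset.Ioo σ τ).Nonempty := ⟨σ + 1, Finset.mem_Ioo.2 ⟨by omega, by omega⟩⟩
    obtain ⟨k, hkmem, hmax⟩ := Finset.exists_max_image (Finset.Ioo σ τ) b hne
    rw [Finset.mem_Ioo] at hkmem
    obtain ⟨hkσ, hkτ⟩ := hkmem
    have hk1 : 1 ≤ k := by omega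
    have hkM : k ≤ 16 * n ^ 2 := by omega
    have hkmax : ∀ l, σ < l → l < τ → l ≠ k → b l < b k := by
      intro l h1 h2 hne'
      refine lt_of_le_of_ne (hmax l (Finset.mem_Ioo.2 ⟨h1, h2⟩)) ?_
      exact hinj l k (by omega) (by omega) hk1 hkM hne'
    -- k is close to one of the endpoints
    have hcase : k ≤ σ + 4 * n ∨ τ ≤ k + 4 * n := by
      by_contra hc
      push_neg at hc
      obtain ⟨hc1, hc2⟩ := hc
      exact hpeak ⟨k, by omega, by omega, fun l hl1 hl2 hne' =>
        hkmax l (by omega) (by omega) hne'⟩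
    rcases hcase with hA | hB
    · -- add k to S
      have hknS : k ∉ S := by
        intro hkS
        have : k ≤ σ := by rw [hσ ⟨k, hkS⟩]; exact Finset.le_max' _ _ hkS
        omega
      refine ⟨insert k S, T, k, τ, ?_, hT, ?_, ?_, hTτ, hτ, ?_, ?_, ?_, ?_⟩
      · intro s hs
        rcases Finset.mem_insert.1 hs with h | h
        · exact ⟨by omega, by omega⟩
        · exact hS s h
      · intro h; simp at h
      · intro h
        refine le_antisymm (Finset.le_max' _ _ (Finset.mem_insert_self k S)) ?_
        apply Finset.max'_le
        intro y hy
        rcases Finset.mem_insert.1 hy with h' | h'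
        · omega
        · have : y ≤ σ := by rw [hσ ⟨y, h'⟩]; exact Finset.le_max' _ _ h'
          omega
      · rw [Finset.card_insert_of_notMem hknS]; omega
      · have hA' : (k : ℤ) ≤ σ + 4 * n := by exact_mod_cast hA
        have hexp : (4 * n * (r + 1) : ℤ) = 4 * n * r + 4 * n := by ring
        push_cast
        linarith [hgap]
      · intro s hs l hl1 hl2
        rcases Finset.mem_insert.1 hs with h | h
        · subst h; exact hkmax l (by omega) hl2 (by omega)
        · exact hdomS s h l hl1 hl2
      · intro t ht l hl1 hl2
        exact hdomT t ht l (by omega) hl2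
    · -- add k to T
      have hknT : k ∉ T := by
        intro hkT
        have : τ ≤ k := by rw [hτ ⟨k, hkT⟩]; exact Finset.min'_le _ _ hkT
        omega
      refine ⟨S, insert k T, σ, k, hS, ?_, hSσ, hσ, ?_, ?_, ?_, ?_, ?_, ?_⟩
      · intro t ht
        rcases Finset.mem_insert.1 ht with h | h
        · exact ⟨by omega, by omega⟩
        · exact hT t h
      · intro h; simp at h
      · intro h
        refine le_antisymm ?_ (Finset.min'_le _ _ (Finset.mem_insert_self k T))
        apply Finset.le_min'
        intro y hy
        rcases Finset.mem_insert.1 hy with h' | h'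
        · omega
        · have : τ ≤ y := by rw [hτ ⟨y, h'⟩]; exact Finset.min'_le _ _ h'
          omega
      · rw [Finset.card_insert_of_notMem hknT]; omega
      · have hB' : (τ : ℤ) ≤ k + 4 * n := by exact_mod_cast hB
        have hexp : (4 * n * (r + 1) : ℤ) = 4 * n * r + 4 * n := by ring
        push_cast
        linarith [hgap]
      · intro s hs l hl1 hl2
        exact hdomS s hs l hl1 (by omega)
      · intro t ht l hl1 hl2
        rcases Finset.mem_insert.1 ht with h | h
        · subst h; exact hkmax l hl1 (by omega) (by omega)
        · exact hdomT t h l hl1 hl2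
end
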